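/- Fix h₀ ∈ ℝ with h₀ ≠ 0 and h₀ ≠ −1, and set c = h₀² + 2h₀. For h ≠ h₀ near h₀ define x(h) = (c − h)(h + 1)/(c − 2h − h²)² and y(h) = (c − 2h − h²)²(c − h − h²)/(c − h)². Then Q(x(h), y(h)) tends to the finite limit −u(h₀² + h₀, h₀) as h tends to h₀ (within the punctured neighborhood where the formulas are defined), even though (x(h), y(h)) tends to infinity. -/

import Mathlib

open Filter

/-- `t = xy − 1`. -/
noncomputable def tF (x y : ℝ) : ℝ := x * y - 1

/-- `h = t(xt + 1)`. -/
noncomputable def hF (x y : ℝ) : ℝ := tF x y * (x * tF x y + 1)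

/-- `f = (xt + 1)²(t² + y)`. -/
noncomputable def fF (x y : ℝ) : ℝ := (x * tF x y + 1) ^ 2 * (tF x y ^ 2 + y)

/-- The auxiliary polynomial `u(f,h)`. -/
noncomputable def uF (f h : ℝ) : ℝ :=
  170 * f * h + 91 * h ^ 2 + 195 * f * h ^ 2 + 69 * h ^ 3 + 75 * f * h ^ 3 + (75 / 4) * h ^ 4

/-- `Q = −t² − 6th(h + 1) − u(f,h)`. -/
noncomputable def QF (x y : ℝ) : ℝ :=
  -tF x y ^ 2 - 6 * tF x y * hF x y * (hF x y + 1) - uF (fF x y) (hF x y)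

/-!
Write `D = c − 2h − h²` and `E = c − h`. Along the curve `(x(h), y(h))` the polynomials take the
values `h(x, y) = h`, `f(x, y) = E` and `t(x, y) = hD/E`, so it is the branch of the level set
`P = c` on which `h` serves as parameter, and `Q(x(h), y(h)) = −t² − 6th(h + 1) − u(E, h)`
is a rational function of `h` that is continuous at `h₀`, where `E = h₀² + h₀ ≠ 0`. At
`c = h₀² + 2h₀` the factor `D = (h₀ − h)(h + h₀ + 2)` vanishes at `h₀`, so `t → 0` and
`Q → −u(h₀² + h₀, h₀)`, while `x(h) = E(h + 1)/D²` has a nonzero numerator at `h₀` and blows up.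
-/

open Topology

noncomputable def curveX (c h : ℝ) : ℝ := (c - h) * (h + 1) / (c - 2 * h - h ^ 2) ^ 2

noncomputable def curveY (c h : ℝ) : ℝ := (c - 2 * h - h ^ 2) ^ 2 * (c - h - h ^ 2) / (c - h) ^ 2

section Parametrization

variable {c h : ℝ}

theorem tF_curve (hD : c - 2 * h - h ^ 2 ≠ 0) (hE : c - h ≠ 0) :
    tF (curveX c h) (curveY c h) = h * (c - 2 * h - h ^ 2) / (c - h) := by
  rw [tF, curveX, curveY, div_mul_div_comm, div_sub_one (by positivity),
    div_eq_div_iff (by positivity) hE]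
  ring

theorem curveX_mul_tF_add_one (hD : c - 2 * h - h ^ 2 ≠ 0) (hE : c - h ≠ 0) :
    curveX c h * tF (curveX c h) (curveY c h) + 1 = (c - h) / (c - 2 * h - h ^ 2) := by
  rw [tF_curve hD hE, curveX, div_mul_div_comm, div_add_one (by positivity),
    div_eq_div_iff (by positivity) hD]
  ring

theorem hF_curve (hD : c - 2 * h - h ^ 2 ≠ 0) (hE : c - h ≠ 0) :
    hF (curveX c h) (curveY c h) = h := by
  rw [hF, curveX_mul_tF_add_one hD hE, tF_curve hD hE, div_mul_div_comm,
    div_eq_iff (mul_ne_zero hE hD)]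
  ring

theorem fF_curve (hD : c - 2 * h - h ^ 2 ≠ 0) (hE : c - h ≠ 0) :
    fF (curveX c h) (curveY c h) = c - h := by
  rw [fF, curveX_mul_tF_add_one hD hE, tF_curve hD hE, curveY, div_pow, div_pow, ← add_div,
    div_mul_div_comm, div_eq_iff (by positivity)]
  ring

theorem QF_curve (hD : c - 2 * h - h ^ 2 ≠ 0) (hE : c - h ≠ 0) :
    QF (curveX c h) (curveY c h) =
      -(h * (c - 2 * h - h ^ 2) / (c - h)) ^ 2
        - 6 * (h * (c - 2 * h - h ^ 2) / (c - h)) * h * (h + 1) - uF (c - h) h := by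
  rw [QF, hF_curve hD hE, fF_curve hD hE, tF_curve hD hE]

end Parametrization

theorem tendsto_norm_div_atTop {α 𝕜 : Type*} [NormedDivisionRing 𝕜] {l : Filter α}
    {f g : α → 𝕜} {a : 𝕜} (ha : a ≠ 0) (hf : Tendsto f l (𝓝 a)) (hg : Tendsto g l (𝓝[≠] 0)) :
    Tendsto (fun x => ‖f x / g x‖) l atTop := by
  simp only [div_eq_mul_inv, norm_mul]
  exact hf.norm.pos_mul_atTop (norm_pos_iff.2 ha) (tendsto_norm_inv_nhdsNE_zero_atTop.comp hg)

section Limits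

variable {h₀ : ℝ}

theorem curve_sub_ne_zero (h0 : h₀ ≠ 0) (h1 : h₀ ≠ -1) : h₀ ^ 2 + 2 * h₀ - h₀ ≠ 0 := by
  have : h₀ ^ 2 + 2 * h₀ - h₀ = h₀ * (h₀ + 1) := by ring
  rw [this]
  exact mul_ne_zero h0 (by contrapose! h1; linarith)

theorem eventually_curve_sub_ne_zero (h0 : h₀ ≠ 0) (h1 : h₀ ≠ -1) :
    ∀ᶠ h in 𝓝[≠] h₀, h₀ ^ 2 + 2 * h₀ - h ≠ 0 :=
  nhdsWithin_le_nhds <| (continuous_const.sub continuous_id).continuousAt.eventually_ne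
    (curve_sub_ne_zero h0 h1)

theorem eventually_curve_denom_ne_zero (h1 : h₀ ≠ -1) :
    ∀ᶠ h in 𝓝[≠] h₀, h₀ ^ 2 + 2 * h₀ - 2 * h - h ^ 2 ≠ 0 := by
  have hroot : ∀ᶠ h in 𝓝[≠] h₀, h + h₀ + 2 ≠ 0 :=
    nhdsWithin_le_nhds <|
      (by fun_prop : Continuous fun h : ℝ => h + h₀ + 2).continuousAt.eventually_ne
      (show h₀ + h₀ + 2 ≠ 0 by contrapose! h1; linarith)
  filter_upwards [hroot, self_mem_nhdsWithin] with h hroot hne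
  have : h₀ ^ 2 + 2 * h₀ - 2 * h - h ^ 2 = (h₀ - h) * (h + h₀ + 2) := by ring
  rw [this]
  exact mul_ne_zero (sub_ne_zero.2 (Ne.symm hne)) hroot

theorem tendsto_QF_curve (h0 : h₀ ≠ 0) (h1 : h₀ ≠ -1) :
    Tendsto (fun h => QF (curveX (h₀ ^ 2 + 2 * h₀) h) (curveY (h₀ ^ 2 + 2 * h₀) h))
      (𝓝[≠] h₀) (𝓝 (-uF (h₀ ^ 2 + h₀) h₀)) := by
  set c := h₀ ^ 2 + 2 * h₀
  have hE := curve_sub_ne_zero h0 h1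
  have hcont : ContinuousAt (fun h => -(h * (c - 2 * h - h ^ 2) / (c - h)) ^ 2
      - 6 * (h * (c - 2 * h - h ^ 2) / (c - h)) * h * (h + 1) - uF (c - h) h) h₀ := by
    unfold uF
    fun_prop (disch := exact hE)
  have hval : -(h₀ * (c - 2 * h₀ - h₀ ^ 2) / (c - h₀)) ^ 2
      - 6 * (h₀ * (c - 2 * h₀ - h₀ ^ 2) / (c - h₀)) * h₀ * (h₀ + 1) - uF (c - h₀) h₀
      = -uF (h₀ ^ 2 + h₀) h₀ := by
    have hD : c - 2 * h₀ - h₀ ^ 2 = 0 := by ring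
    have hE' : c - h₀ = h₀ ^ 2 + h₀ := by ring
    simp [hD, hE']
  rw [← hval]
  refine (hcont.tendsto.mono_left nhdsWithin_le_nhds).congr' ?_
  filter_upwards [eventually_curve_denom_ne_zero h1, eventually_curve_sub_ne_zero h0 h1]
    with h hD hE
  exact (QF_curve hD hE).symm

theorem tendsto_norm_curve_atTop (h0 : h₀ ≠ 0) (h1 : h₀ ≠ -1) :
    Tendsto (fun h => ‖(curveX (h₀ ^ 2 + 2 * h₀) h, curveY (h₀ ^ 2 + 2 * h₀) h)‖)
      (𝓝[≠] h₀) atTop := by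
  set c := h₀ ^ 2 + 2 * h₀
  have hnum : (c - h₀) * (h₀ + 1) ≠ 0 :=
    mul_ne_zero (curve_sub_ne_zero h0 h1) (by contrapose! h1; linarith)
  have hden : Tendsto (fun h => (c - 2 * h - h ^ 2) ^ 2) (𝓝[≠] h₀) (𝓝[≠] 0) := by
    refine tendsto_nhdsWithin_iff.2 ⟨?_, ?_⟩
    · have hD : (c - 2 * h₀ - h₀ ^ 2) ^ 2 = 0 := by ring
      rw [← hD]
      exact ((by fun_prop : Continuous fun h : ℝ => (c - 2 * h - h ^ 2) ^ 2).tendsto h₀).mono_left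
        nhdsWithin_le_nhds
    · filter_upwards [eventually_curve_denom_ne_zero h1] with h hD
      exact pow_ne_zero 2 hD
  have hx := tendsto_norm_div_atTop hnum
    (((by fun_prop : Continuous fun h : ℝ => (c - h) * (h + 1)).tendsto h₀).mono_left
      nhdsWithin_le_nhds) hden
  exact tendsto_atTop_mono (fun h => norm_fst_le _) hx

end Limits

/-- As `h → h₀` along the level curve `P = h₀² + 2h₀` (for `h₀ ≠ 0, −1`), the
point `(x(h), y(h))` tends to infinity, yet `Q(x(h), y(h))` tends to the finite
limit `−u(h₀² + h₀, h₀)`. -/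
theorem pinchuk_Q_finite_limit (h₀ : ℝ) (h0 : h₀ ≠ 0) (h1 : h₀ ≠ -1) (c : ℝ)
    (hc : c = h₀ ^ 2 + 2 * h₀) :
    Tendsto
      (fun h : ℝ =>
        QF ((c - h) * (h + 1) / (c - 2 * h - h ^ 2) ^ 2)
          ((c - 2 * h - h ^ 2) ^ 2 * (c - h - h ^ 2) / (c - h) ^ 2))
      (nhdsWithin h₀ {h₀}ᶜ) (nhds (-uF (h₀ ^ 2 + h₀) h₀)) ∧
    Tendsto
      (fun h : ℝ =>
        ‖(((c - h) * (h + 1) / (c - 2 * h - h ^ 2) ^ 2),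
          ((c - 2 * h - h ^ 2) ^ 2 * (c - h - h ^ 2) / (c - h) ^ 2))‖)
      (nhdsWithin h₀ {h₀}ᶜ) atTop := by
  subst hc
  exact ⟨tendsto_QF_curve h0 h1, tendsto_norm_curve_atTop h0 h1⟩
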